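/- Let A, B : X → X be linear operators. Then for every x ∈ X with ⟨x, x⟩ = 1 one has max{Δ_x(A), Δ_x(B)} ≥ √(|⟨(A−B)x, (A−B)x⟩ − ⟨(A−B)x, x⟩²|), where the outer |·| is the absolute value of K and √ is the real square root. -/

import Mathlib

/-!
Write `y = (A - B) x` and `P z = z - ⟨z, x⟩ x` for the projection onto the orthogonal complement
of `x`. Since `⟨x, x⟩ = 1` and the form is symmetric, `⟨P y, P y⟩ = ⟨y, y⟩ - ⟨y, x⟩²`, so the
left-hand side is at most `‖P y‖` by Cauchy–Schwarz. By linearity `P y = P (A x) - P (B x)`, and the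
ultrametric inequality bounds its norm by `max (‖P (A x)‖) (‖P (B x)‖) = max (Δ_x A) (Δ_x B)`.
-/

section UltrametricNorm

variable {K X : Type*} [Ring K] [Nontrivial K] [AddCommGroup X] [Module K X]
  {v : AbsoluteValue K ℝ} {N : X → ℝ}

theorem map_neg_of_map_smul (hN_smul : ∀ (a : K) (u : X), N (a • u) = v a * N u) (u : X) :
    N (-u) = N u := by
  rw [← neg_one_smul K u, hN_smul, v.map_neg, v.map_one, one_mul]

theorem nonneg_of_map_add_le_max_of_map_smul (hN_ultra : ∀ u w : X, N (u + w) ≤ max (N u) (N w))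
    (hN_smul : ∀ (a : K) (u : X), N (a • u) = v a * N u) (u : X) : 0 ≤ N u := by
  have hN_zero : N 0 = 0 := by simpa using hN_smul 0 0
  simpa [hN_zero, map_neg_of_map_smul hN_smul] using hN_ultra u (-u)

theorem map_sub_le_max_of_map_smul (hN_ultra : ∀ u w : X, N (u + w) ≤ max (N u) (N w))
    (hN_smul : ∀ (a : K) (u : X), N (a • u) = v a * N u) (u w : X) :
    N (u - w) ≤ max (N u) (N w) := by
  simpa [sub_eq_add_neg, map_neg_of_map_smul hN_smul] using hN_ultra u (-w)

end UltrametricNorm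

namespace LinearMap.BilinForm

variable {K X : Type*} [CommRing K] [AddCommGroup X] [Module K X]

def ofSymm (ip : X → X → K) (hsymm : ∀ u w : X, ip u w = ip w u)
    (hadd : ∀ u w z : X, ip u (w + z) = ip u w + ip u z)
    (hsmul : ∀ (a : K) (u w : X), ip u (a • w) = a * ip u w) : LinearMap.BilinForm K X :=
  LinearMap.mk₂ K ip (fun u w z => by rw [hsymm, hadd, hsymm z, hsymm z])
    (fun a u w => by rw [hsymm, hsmul, hsymm, smul_eq_mul]) hadd hsmul

theorem ofSymm_isSymm (ip : X → X → K) (hsymm : ∀ u w : X, ip u w = ip w u)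
    (hadd : ∀ u w z : X, ip u (w + z) = ip u w + ip u z)
    (hsmul : ∀ (a : K) (u w : X), ip u (a • w) = a * ip u w) :
    (ofSymm ip hsymm hadd hsmul).IsSymm :=
  ⟨hsymm⟩

def orthProj (β : LinearMap.BilinForm K X) (x : X) : X →ₗ[K] X :=
  LinearMap.id - (β.flip x).smulRight x

theorem orthProj_apply (β : LinearMap.BilinForm K X) (x y : X) :
    β.orthProj x y = y - β y x • x :=
  rfl

theorem apply_orthProj_orthProj {β : LinearMap.BilinForm K X} (hβ : β.IsSymm) {x : X}
    (hx : β x x = 1) (y : X) : β (β.orthProj x y) (β.orthProj x y) = β y y - β y x ^ 2 := by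
  simp only [orthProj_apply, map_sub, map_smul, LinearMap.sub_apply, LinearMap.smul_apply,
    smul_eq_mul, hx, hβ.eq x y]
  ring

end LinearMap.BilinForm

theorem sqrt_apply_self_le {K X : Type*} [CommRing K] [AddCommGroup X] [Module K X]
    {v : AbsoluteValue K ℝ} {N : X → ℝ} {β : LinearMap.BilinForm K X}
    (hcs : ∀ u w : X, v (β u w) ≤ N u * N w) (hN : ∀ u, 0 ≤ N u) (u : X) :
    Real.sqrt (v (β u u)) ≤ N u :=
  Real.sqrt_le_iff.mpr ⟨hN u, by simpa [sq] using hcs u u⟩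

theorem padic_uncertainty_difference_inner_form_general
    {K X : Type*} [Field K] [AddCommGroup X] [Module K X]
    (v : AbsoluteValue K ℝ)
    (N : X → ℝ)
    (hN_ultra : ∀ u w : X, N (u + w) ≤ max (N u) (N w))
    (hN_smul : ∀ (a : K) (u : X), N (a • u) = v a * N u)
    (ip : X → X → K)
    (hsymm : ∀ u w : X, ip u w = ip w u)
    (hadd : ∀ u w z : X, ip u (w + z) = ip u w + ip u z)
    (hsmul : ∀ (a : K) (u w : X), ip u (a • w) = a * ip u w)
    (hcs : ∀ u w : X, v (ip u w) ≤ N u * N w)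
    (A B : X →ₗ[K] X)
    (x : X) (hx : ip x x = 1) :
    max (N (A x - ip (A x) x • x)) (N (B x - ip (B x) x • x)) ≥
      Real.sqrt (v (ip ((A - B) x) ((A - B) x) - ip ((A - B) x) x ^ 2)) := by
  let β := LinearMap.BilinForm.ofSymm ip hsymm hadd hsmul
  have hP : β.orthProj x ((A - B) x) = β.orthProj x (A x) - β.orthProj x (B x) := by
    rw [LinearMap.sub_apply, map_sub]
  calc Real.sqrt (v (ip ((A - B) x) ((A - B) x) - ip ((A - B) x) x ^ 2))
      = Real.sqrt (v (β (β.orthProj x ((A - B) x)) (β.orthProj x ((A - B) x)))) := by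
        rw [β.apply_orthProj_orthProj (LinearMap.BilinForm.ofSymm_isSymm ip hsymm hadd hsmul) hx]
        rfl
    _ ≤ N (β.orthProj x ((A - B) x)) :=
        sqrt_apply_self_le hcs (nonneg_of_map_add_le_max_of_map_smul hN_ultra hN_smul) _
    _ ≤ max (N (A x - ip (A x) x • x)) (N (B x - ip (B x) x • x)) := by
        rw [hP]
        exact map_sub_le_max_of_map_smul hN_ultra hN_smul _ _

/-- For linear operators `A B` and `⟨x, x⟩ = 1`:
`max{Δ_x(A), Δ_x(B)} ≥ √(|⟨(A−B)x, (A−B)x⟩ − ⟨(A−B)x, x⟩²|)`. -/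
theorem padic_uncertainty_difference_inner_form
    {K X : Type*} [Field K] [AddCommGroup X] [Module K X]
    (v : AbsoluteValue K ℝ) (hna : IsNonarchimedean v)
    (N : X → ℝ)
    (hN_ultra : ∀ u w : X, N (u + w) ≤ max (N u) (N w))
    (hN_smul : ∀ (a : K) (u : X), N (a • u) = v a * N u)
    (ip : X → X → K)
    (hsymm : ∀ u w : X, ip u w = ip w u)
    (hadd : ∀ u w z : X, ip u (w + z) = ip u w + ip u z)
    (hsmul : ∀ (a : K) (u w : X), ip u (a • w) = a * ip u w)
    (hcs : ∀ u w : X, v (ip u w) ≤ N u * N w)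
    (A B : X →ₗ[K] X)
    (x : X) (hx : ip x x = 1) :
    max (N (A x - ip (A x) x • x)) (N (B x - ip (B x) x • x)) ≥
      Real.sqrt (v (ip ((A - B) x) ((A - B) x) - ip ((A - B) x) x ^ 2)) :=
  padic_uncertainty_difference_inner_form_general v N hN_ultra hN_smul ip hsymm hadd hsmul hcs A B x
    hx
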